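/- arXiv:1406.3988 — 4 statements merged into one kernel-verified Lean document; each statement's English description precedes it below -/
import Mathlib

section
/- Suppose `S` is a type, `next : S → S → Prop` a transition relation, `inv aux : S → Prop` predicates, and `R : S → S → Prop` a well-founded relation (well-founded in the sense that there is no infinite sequence s₀, s₁, ... with R sᵢ sᵢ₊₁ for all i; equivalently, the converse relation is well-founded). If for every state s with `inv s` and `¬ aux s` there exists s' with `next s s'`, `inv s'`, and `R s s'`, then for every state s₀ with `inv s₀` there exists a finite sequence of states s₀, s₁, ..., sₙ such that `next sᵢ sᵢ₊₁` for all i < n and `aux sₙ` holds. (This is the core soundness argument of the EF proof rule: an invariant plus a well-founded rank guarantees reachability of the target set.) -/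
theorem ef_rule_sound_aux {S : Type*} (next : S → S → Prop) (inv aux : S → Prop)
    (R : S → S → Prop)
    (hR : ¬ ∃ f : ℕ → S, ∀ i, R (f i) (f (i + 1)))
    (hstep : ∀ s, inv s → ¬ aux s → ∃ s', next s s' ∧ inv s' ∧ R s s') :
    ∀ s₀, inv s₀ → ∃ n, ∃ p : ℕ → S, p 0 = s₀ ∧
      (∀ i < n, next (p i) (p (i + 1))) ∧ aux (p n) := by
  have hwf : WellFounded (fun a b => R b a) := by
    by_contra hnwf
    have ⟨x, hx⟩ : ∃ x, ¬ Acc (fun a b => R b a) x := by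
      by_contra h
      push_neg at h
      exact hnwf ⟨h⟩
    have key : ∀ x : S, ¬ Acc (fun a b => R b a) x →
        ∃ y, R x y ∧ ¬ Acc (fun a b => R b a) y := by
      intro x hx
      by_contra h
      push_neg at h
      exact hx (Acc.intro x h)
    choose g hg1 hg2 using key
    let f : ℕ → {x : S // ¬ Acc (fun a b => R b a) x} := fun n =>
      Nat.rec ⟨x, hx⟩ (fun _ p => ⟨g p.1 p.2, hg2 p.1 p.2⟩) n
    exact hR ⟨fun n => (f n).1, fun i => hg1 (f i).1 (f i).2⟩
  intro s₀
  induction s₀ using hwf.induction with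
  | _ s ih =>
    intro hinv
    by_cases ha : aux s
    · exact ⟨0, fun _ => s, rfl, by simp, ha⟩
    · obtain ⟨s', hn, hinv', hRs⟩ := hstep s hinv ha
      obtain ⟨n, p, hp0, hps, hpa⟩ := ih s' hRs hinv'
      refine ⟨n + 1, fun i => if i = 0 then s else p (i - 1), by simp, ?_, ?_⟩
      · intro i hi
        rcases Nat.eq_zero_or_pos i with h | h
        · subst h; simpa [hp0] using hn
        · have h1 : i ≠ 0 := h.ne'
          have h2 : i + 1 ≠ 0 := by omega
          simp only [h1, h2, if_false]
          have : i - 1 + 1 = i + 1 - 1 := by omega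
          rw [← this]
          exact hps (i - 1) (by omega)
      · simpa using hpa

theorem ef_rule_sound {S : Type*} (next : S → S → Prop) (inv aux : S → Prop)
    (R : S → S → Prop)
    (hR : ¬ ∃ f : ℕ → S, ∀ i, R (f i) (f (i + 1)))
    (hstep : ∀ s, inv s → ¬ aux s → ∃ s', next s s' ∧ inv s' ∧ R s s') :
    ∀ s₀, inv s₀ → ∃ n, ∃ p : Fin (n + 1) → S, p 0 = s₀ ∧
      (∀ i : Fin n, next (p i.castSucc) (p i.succ)) ∧ aux (p (Fin.last n)) := by
  intro s₀ h
  obtain ⟨n, p, hp0, hps, hpa⟩ := ef_rule_sound_aux next inv aux R hR hstep s₀ h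
  exact ⟨n, fun i => p i.val, hp0, fun i => hps i.val i.isLt, hpa⟩
end

section
/- Let `S` be a type, `next : S → S → Prop`, predicates `inv aux₁ aux₂ : S → Prop`, and a relation `R : S → S → Prop` admitting no infinite chains (no f : ℕ → S with R (f i) (f (i+1)) for all i). Assume (1) for all s, `inv s ∧ ¬ aux₂ s → aux₁ s`, and (2) for all s s', `inv s ∧ ¬ aux₂ s ∧ next s s' → inv s' ∧ R s s'`. Then for every infinite path π : ℕ → S with `inv (π 0)` and `next (π i) (π (i+1))` for all i, there exists j such that `aux₂ (π j)` and `aux₁ (π i)` for all i < j. (Soundness of the A(φ₁ U φ₂) proof rule.) -/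
theorem au_rule_sound {S : Type*} (next : S → S → Prop) (inv aux₁ aux₂ : S → Prop)
    (R : S → S → Prop)
    (hR : ¬ ∃ f : ℕ → S, ∀ i, R (f i) (f (i + 1)))
    (h1 : ∀ s, inv s ∧ ¬ aux₂ s → aux₁ s)
    (h2 : ∀ s s', inv s ∧ ¬ aux₂ s ∧ next s s' → inv s' ∧ R s s') :
    ∀ π : ℕ → S, inv (π 0) → (∀ i, next (π i) (π (i + 1))) →
      ∃ j, aux₂ (π j) ∧ ∀ i < j, aux₁ (π i) := by
  intro π h0 hnext
  by_cases hex : ∃ j, aux₂ (π j)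
  · classical
    have hex' : ∃ j, aux₂ (π j) := hex
    let j := Nat.find hex'
    have hj : aux₂ (π j) := Nat.find_spec hex'
    have hmin : ∀ i, aux₂ (π i) → j ≤ i := fun i h => Nat.find_le h
    have hinv : ∀ i ≤ j, inv (π i) := by
      intro i hi
      induction i with
      | zero => exact h0
      | succ n ih =>
        have hn : n ≤ j := Nat.le_of_succ_le hi
        have hnj : n < j := hi
        have : ¬ aux₂ (π n) := fun h => absurd (hmin n h) (Nat.not_le.mpr hnj)
        exact (h2 _ _ ⟨ih hn, this, hnext n⟩).1
    exact ⟨j, hj, fun i hi =>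
      h1 _ ⟨hinv i (le_of_lt hi), fun h => absurd (hmin i h) (Nat.not_le.mpr hi)⟩⟩
  · push_neg at hex
    exfalso
    apply hR
    refine ⟨π, fun i => ?_⟩
    have hinv : ∀ i, inv (π i) := by
      intro i
      induction i with
      | zero => exact h0
      | succ n ih => exact (h2 _ _ ⟨ih, hex n, hnext n⟩).1
    exact (h2 _ _ ⟨hinv i, hex i, hnext i⟩).2
end

section
/- Let `S` be a type, `next : S → S → Prop`, predicates `inv aux₁ aux₂ : S → Prop`, and a relation `R : S → S → Prop` admitting no infinite chains. Assume that for all s with `inv s ∧ ¬ aux₂ s` we have `aux₁ s` and there exists s' with `next s s'`, `inv s'`, and `R s s'`. Then for every s₀ with `inv s₀` there exists a finite sequence s₀, ..., sₙ with `next sᵢ sᵢ₊₁` for i < n, `aux₂ sₙ`, and `aux₁ sᵢ` for all i < n. (Soundness of the E(φ₁ U φ₂) proof rule.) -/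
theorem eu_rule_sound {S : Type*} (next : S → S → Prop) (inv aux₁ aux₂ : S → Prop)
    (R : S → S → Prop)
    (hR : ¬ ∃ f : ℕ → S, ∀ i, R (f i) (f (i + 1)))
    (hstep : ∀ s, inv s ∧ ¬ aux₂ s → aux₁ s ∧ ∃ s', next s s' ∧ inv s' ∧ R s s') :
    ∀ s₀, inv s₀ → ∃ n, ∃ p : Fin (n + 1) → S, p 0 = s₀ ∧
      (∀ i : Fin n, next (p i.castSucc) (p i.succ)) ∧ aux₂ (p (Fin.last n)) ∧
      (∀ i : Fin n, aux₁ (p i.castSucc)) := by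
  have hwf : WellFounded (fun a b => R b a) := by
    by_contra hwf
    have hex : ∃ x, ¬ Acc (fun a b => R b a) x := by
      by_contra h
      push_neg at h
      exact hwf ⟨h⟩
    obtain ⟨x₀, hx₀⟩ := hex
    have key : ∀ x : {s // ¬ Acc (fun a b => R b a) s},
        ∃ y : {s // ¬ Acc (fun a b => R b a) s}, R x.1 y.1 := by
      rintro ⟨x, hx⟩
      by_contra h
      push_neg at h
      exact hx (Acc.intro x fun y hy => by_contra fun hy' => h ⟨y, hy'⟩ hy)
    choose g hg using key
    exact hR ⟨fun n => (g^[n] ⟨x₀, hx₀⟩).1, fun i => by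
      show R (g^[i] ⟨x₀, hx₀⟩).1 (g^[i+1] ⟨x₀, hx₀⟩).1
      rw [Function.iterate_succ_apply']; exact hg _⟩
  intro s₀ hs₀
  induction s₀ using hwf.induction with
  | _ s₀ ih =>
    by_cases h2 : aux₂ s₀
    · exact ⟨0, fun _ => s₀, rfl, fun i => i.elim0, h2, fun i => i.elim0⟩
    · obtain ⟨h1, s', hnext, hinv', hRs⟩ := hstep s₀ ⟨hs₀, h2⟩
      obtain ⟨n, p, hp0, hpnext, hp2, hp1⟩ := ih s' hRs hinv'
      refine ⟨n + 1, Fin.cases s₀ p, by simp, ?_, ?_, ?_⟩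
      · intro i
        induction i using Fin.cases with
        | zero =>
          simp only [Fin.castSucc_zero, Fin.cases_zero, Fin.cases_succ, hp0]
          exact hnext
        | succ j => simpa [Fin.castSucc_succ] using hpnext j
      · simpa [Fin.last, Fin.succ] using hp2
      · intro i
        induction i using Fin.cases with
        | zero => simpa using h1
        | succ j => simpa using hp1 j
end

section
/- Let `S` be a type, `next : S → S → Prop` a total relation, `aux : S → Prop`, and `s₀ : S`. Suppose there exists a finite next-path s₀, s₁, ..., sₙ with `aux sₙ`. Then there exist a predicate `inv : S → Prop` and a relation `R : S → S → Prop` admitting no infinite chains such that `inv s₀` holds and for every s with `inv s ∧ ¬ aux s` there exists s' with `next s s'`, `inv s'`, and `R s s'`. (Completeness of the EF proof rule: reachability of aux implies existence of an invariant and well-founded rank certificate.) -/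
theorem ef_rule_complete {S : Type*} (next : S → S → Prop)
    (htotal : ∀ s, ∃ s', next s s') (aux : S → Prop) (s₀ : S)
    (hreach : ∃ n, ∃ p : Fin (n + 1) → S, p 0 = s₀ ∧
      (∀ i : Fin n, next (p i.castSucc) (p i.succ)) ∧ aux (p (Fin.last n))) :
    ∃ (inv : S → Prop) (R : S → S → Prop),
      (¬ ∃ f : ℕ → S, ∀ i, R (f i) (f (i + 1))) ∧ inv s₀ ∧
      (∀ s, inv s → ¬ aux s → ∃ s', next s s' ∧ inv s' ∧ R s s') := by
  classical
  obtain ⟨n, p, hp0, hstep, haux⟩ := hreach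
  -- q i = p (min i n)
  set q : ℕ → S := fun i => p ⟨min i n, by omega⟩ with hq
  have hq0 : q 0 = s₀ := by
    simpa [hq, Nat.min_eq_left (Nat.zero_le n)] using hp0
  have hqn : aux (q n) := by
    simpa [hq, Fin.last] using haux
  have hqstep : ∀ i, i < n → next (q i) (q (i + 1)) := by
    intro i hi
    have := hstep ⟨i, hi⟩
    simpa [hq, Fin.castSucc, Fin.succ, Nat.min_eq_left hi.le,
      Nat.min_eq_left (Nat.succ_le_of_lt hi)] using this
  set idx : S → ℕ := fun s => Nat.findGreatest (fun i => q i = s) n with hidx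
  refine ⟨fun s => ∃ i ≤ n, q i = s, fun s s' => n - idx s' < n - idx s, ?_, ?_, ?_⟩
  · rintro ⟨f, hf⟩
    set g : ℕ → ℕ := fun i => n - idx (f i) with hg
    have key : ∀ i, g i + i ≤ g 0 := by
      intro i
      induction i with
      | zero => omega
      | succ k ih =>
        have := hf k
        simp only [hg] at *
        omega
    have := key (g 0 + 1)
    omega
  · exact ⟨0, Nat.zero_le n, hq0⟩
  · rintro s ⟨i, hin, hqi⟩ hnaux
    have hk : q (idx s) = s :=
      Nat.findGreatest_spec (P := fun i => q i = s) hin hqi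
    have hkle : idx s ≤ n := Nat.findGreatest_le n
    have hklt : idx s < n := by
      rcases lt_or_eq_of_le hkle with h | h
      · exact h
      · exact absurd (by rw [← hk, h]; exact hqn) hnaux
    refine ⟨q (idx s + 1), by have h2 := hqstep _ hklt; rwa [hk] at h2, ⟨idx s + 1, hklt, rfl⟩, ?_⟩
    have h1 : idx s + 1 ≤ idx (q (idx s + 1)) :=
      Nat.le_findGreatest hklt rfl
    omega
end
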